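/- Assume s(σ, σ) ≥ 0 for all σ ∈ V, a(v, v) ≥ 0 for all v ∈ M, a is positive definite (a(v, v) = 0 implies v = 0), and the following kernel condition holds: for every λ ∈ V, if s(λ, λ) = 0 and b(λ, v) = 0 for all v ∈ M, then λ = 0. Then the homogeneous primal-dual system has only the trivial solution: if s(λ, σ) + b(σ, u) = 0 for all σ ∈ V and −a(u, v) + b(λ, v) = 0 for all v ∈ M, then λ = 0 and u = 0. (This is the uniqueness argument common to the proofs of the paper's Theorems 3.2 and 3.3; in the paper the kernel condition is supplied by the uniqueness of solutions to the continuous convection problem β·∇λ − cλ = 0, λ = 0 on the inflow boundary.) -/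
import Mathlib


/-- Under nonnegativity of s and a, positive definiteness of a, and the
kernel condition on (s, b), the homogeneous primal-dual system has only the trivial solution. -/
theorem pdwg_homogeneous_trivial
    (V M : Type*) [AddCommGroup V] [Module ℝ V] [AddCommGroup M] [Module ℝ M]
    (s : V →ₗ[ℝ] V →ₗ[ℝ] ℝ) (a : M →ₗ[ℝ] M →ₗ[ℝ] ℝ) (b : V →ₗ[ℝ] M →ₗ[ℝ] ℝ)
    (hs : ∀ σ : V, 0 ≤ s σ σ) (ha : ∀ v : M, 0 ≤ a v v)
    (hadef : ∀ v : M, a v v = 0 → v = 0)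
    (hker : ∀ lam : V, s lam lam = 0 → (∀ v : M, b lam v = 0) → lam = 0) :
    ∀ (lam : V) (u : M),
      (∀ σ : V, s lam σ + b σ u = 0) →
      (∀ v : M, -(a u v) + b lam v = 0) →
      lam = 0 ∧ u = 0 := by
  intro lam u h1 h2
  have e1 := h1 lam
  have e2 := h2 u
  have hb : b lam u = a u u := by linarith
  have hsum : s lam lam + a u u = 0 := by linarith
  have hs0 : s lam lam = 0 := le_antisymm (by linarith [ha u]) (hs lam)
  have ha0 : a u u = 0 := by linarith
  have hu : u = 0 := hadef u ha0
  refine ⟨hker lam hs0 fun v => ?_, hu⟩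
  have := h2 v
  subst hu
  simpa using this
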